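/- Let p ∈ (1, ∞). The functional E(u) = (1/p) ∬_{ℝᵈ×ℝᵈ} |u(x)-u(y)|^p / |x-y|^{d+ps} dx dy satisfies the submodularity inequality E(u ⊓ v) + E(u ⊔ v) ≤ E(u) + E(v) for all measurable u, v : ℝᵈ → ℝ, where ⊓ and ⊔ denote pointwise minimum and maximum. -/

import Mathlib

open MeasureTheory
open scoped ENNReal

/-- The fractional `p`-energy functional with parameter `s`. -/
noncomputable def fracPEnergy (d : ℕ) (s p : ℝ) (u : EuclideanSpace ℝ (Fin d) → ℝ) : ℝ≥0∞ :=
  (ENNReal.ofReal (1 / p)) *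
    ∫⁻ q : EuclideanSpace ℝ (Fin d) × EuclideanSpace ℝ (Fin d),
      ENNReal.ofReal (|u q.1 - u q.2| ^ p / dist q.1 q.2 ^ ((d : ℝ) + p * s))

/-!
The energy integrates `φ (u x - u y)` against a nonnegative kernel, with `φ = |·| ^ p` convex, so
it suffices to prove the pointwise inequality
`φ (min a c - min b e) + φ (max a c - max b e) ≤ φ (a - b) + φ (c - e)`.
It is an equality unless the orders of `a, c` and `b, e` differ; in that case the two
differences on the left lie between `a - b` and `c - e` and have the same sum, so convexity of `φ`
(majorization for two points) gives the inequality.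
-/

open Set

section Convex

variable {𝕜 β : Type*} [Field 𝕜] [LinearOrder 𝕜] [IsStrictOrderedRing 𝕜]
  [AddCommGroup β] [PartialOrder β] [IsOrderedAddMonoid β] [Module 𝕜 β]

theorem ConvexOn.map_add_map_le_of_le_of_le {s : Set 𝕜} {f : 𝕜 → β} (hf : ConvexOn 𝕜 s f)
    {x₁ x₂ y₁ y₂ : 𝕜} (hx₁ : x₁ ∈ s) (hx₂ : x₂ ∈ s) (h₁ : x₁ ≤ y₁) (h₂ : y₁ ≤ x₂)
    (hsum : y₁ + y₂ = x₁ + x₂) :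
    f y₁ + f y₂ ≤ f x₁ + f x₂ := by
  obtain rfl | hlt := (h₁.trans h₂).eq_or_lt
  · obtain rfl : y₁ = x₁ := le_antisymm h₂ h₁
    obtain rfl : y₂ = y₁ := by linear_combination hsum
    rfl
  -- `y₁` and `y₂` are the convex combinations of `x₁, x₂` with weights `(t, 1 - t)` and `(1 - t, t)`.
  set t := (x₂ - y₁) / (x₂ - x₁)
  have hden : x₂ - x₁ ≠ 0 := (sub_pos.2 hlt).ne'
  have ht₀ : 0 ≤ t := div_nonneg (sub_nonneg.2 h₂) (sub_pos.2 hlt).le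
  have ht₁ : 0 ≤ 1 - t := by
    rw [sub_nonneg, div_le_one (sub_pos.2 hlt)]
    linarith
  have hy₁ : t • x₁ + (1 - t) • x₂ = y₁ := by
    simp only [smul_eq_mul, t]
    field_simp
    ring
  have hy₂ : (1 - t) • x₁ + t • x₂ = y₂ := by
    simp only [smul_eq_mul, t]
    field_simp
    linear_combination (x₁ - x₂) * hsum
  have hfy₁ := hf.2 hx₁ hx₂ ht₀ ht₁ (by ring)
  have hfy₂ := hf.2 hx₁ hx₂ ht₁ ht₀ (by ring)
  rw [hy₁] at hfy₁
  rw [hy₂] at hfy₂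
  calc f y₁ + f y₂ ≤ (t • f x₁ + (1 - t) • f x₂) + ((1 - t) • f x₁ + t • f x₂) :=
        add_le_add hfy₁ hfy₂
    _ = f x₁ + f x₂ := by module

theorem ConvexOn.map_min_sub_min_add_map_max_sub_max_le {f : 𝕜 → β} (hf : ConvexOn 𝕜 univ f)
    (a b c e : 𝕜) :
    f (min a c - min b e) + f (max a c - max b e) ≤ f (a - b) + f (c - e) := by
  rcases le_total a c with hac | hca <;> rcases le_total b e with hbe | heb
  · rw [min_eq_left hac, min_eq_left hbe, max_eq_right hac, max_eq_right hbe]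
  · rw [min_eq_left hac, min_eq_right heb, max_eq_right hac, max_eq_left heb]
    exact hf.map_add_map_le_of_le_of_le trivial trivial (by linarith) (by linarith) (by ring)
  · rw [min_eq_right hca, min_eq_left hbe, max_eq_left hca, max_eq_right hbe,
      add_comm (f (a - b))]
    exact hf.map_add_map_le_of_le_of_le trivial trivial (by linarith) (by linarith) (by ring)
  · rw [min_eq_right hca, min_eq_right heb, max_eq_left hca, max_eq_left heb, add_comm]

end Convex

theorem convexOn_abs_rpow {p : ℝ} (hp : 1 ≤ p) : ConvexOn ℝ univ fun x : ℝ => |x| ^ p := by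
  refine ⟨convex_univ, fun x _ y _ a b ha hb hab => ?_⟩
  simp only [smul_eq_mul]
  calc |a * x + b * y| ^ p ≤ (a * |x| + b * |y|) ^ p := by
        gcongr
        calc |a * x + b * y| ≤ |a * x| + |b * y| := abs_add_le _ _
          _ = a * |x| + b * |y| := by rw [abs_mul, abs_mul, abs_of_nonneg ha, abs_of_nonneg hb]
    _ ≤ a * |x| ^ p + b * |y| ^ p := (convexOn_rpow hp).2 (abs_nonneg x) (abs_nonneg y) ha hb hab

theorem lintegral_ofReal_map_min_sub_add_map_max_sub_le {α : Type*} [MeasurableSpace α]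
    {μ : Measure (α × α)} {f : ℝ → ℝ} (hf : ConvexOn ℝ univ f) (hf₀ : ∀ x, 0 ≤ f x)
    {k : α × α → ℝ} (hk : Measurable k) (hk₀ : ∀ q, 0 ≤ k q) {u v : α → ℝ} (hu : Measurable u) :
    ∫⁻ q, ENNReal.ofReal (f (min (u q.1) (v q.1) - min (u q.2) (v q.2)) / k q) ∂μ +
        ∫⁻ q, ENNReal.ofReal (f (max (u q.1) (v q.1) - max (u q.2) (v q.2)) / k q) ∂μ ≤
      ∫⁻ q, ENNReal.ofReal (f (u q.1 - u q.2) / k q) ∂μ +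
        ∫⁻ q, ENNReal.ofReal (f (v q.1 - v q.2) / k q) ∂μ := by
  have hfm : Measurable f := (continuousOn_univ.1 (hf.continuousOn isOpen_univ)).measurable
  have hpoint (q : α × α) (a b c e : ℝ) :
      ENNReal.ofReal (f (min a c - min b e) / k q) + ENNReal.ofReal (f (max a c - max b e) / k q) ≤
        ENNReal.ofReal (f (a - b) / k q) + ENNReal.ofReal (f (c - e) / k q) := by
    have h₀ (x : ℝ) : 0 ≤ f x / k q := div_nonneg (hf₀ x) (hk₀ q)
    rw [← ENNReal.ofReal_add (h₀ _) (h₀ _), ← ENNReal.ofReal_add (h₀ _) (h₀ _), ← add_div,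
      ← add_div]
    exact ENNReal.ofReal_le_ofReal
      (div_le_div_of_nonneg_right (hf.map_min_sub_min_add_map_max_sub_max_le a b c e) (hk₀ q))
  calc _ ≤ _ := le_lintegral_add _ _
    _ ≤ _ := lintegral_mono fun q => hpoint q _ _ _ _
    _ = _ := lintegral_add_left (by fun_prop) _

theorem fracPEnergy_submodular_general (d : ℕ) (s p : ℝ)
    (hp : 1 < p)
    (u v : EuclideanSpace ℝ (Fin d) → ℝ) (hu : Measurable u) :
    fracPEnergy d s p (fun x => min (u x) (v x)) + fracPEnergy d s p (fun x => max (u x) (v x)) ≤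
      fracPEnergy d s p u + fracPEnergy d s p v := by
  simp only [fracPEnergy, ← mul_add]
  exact mul_le_mul_right (lintegral_ofReal_map_min_sub_add_map_max_sub_le
    (convexOn_abs_rpow hp.le) (fun x => Real.rpow_nonneg (abs_nonneg x) p)
    (measurable_dist.pow_const _) (fun q => Real.rpow_nonneg dist_nonneg _) hu) _

theorem fracPEnergy_submodular (d : ℕ) (hd : 1 ≤ d) (s p : ℝ) (hs0 : 0 < s) (hs1 : s < 1)
    (hp : 1 < p)
    (u v : EuclideanSpace ℝ (Fin d) → ℝ) (hu : Measurable u) (hv : Measurable v) :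
    fracPEnergy d s p (fun x => min (u x) (v x)) + fracPEnergy d s p (fun x => max (u x) (v x)) ≤
      fracPEnergy d s p u + fracPEnergy d s p v :=
  fracPEnergy_submodular_general d s p hp u v hu
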